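/- Let A : U → Ũ and C : ℝ^{r,s} → ℝ^{s,r} satisfy A^τ J̃_z A = J_{C^τ(z)} for all z, with C C^τ = C^τ C = −Id and r ≠ s. Then for any odd number p = 2m+1 of orthonormal basis vectors z_1,…,z_p of ℝ^{r,s}: A^τ A · (J_{z_1}···J_{z_p}) · A^τ A = −J_{z_1}···J_{z_p}. -/

import Mathlib

/-- The standard pseudo-Euclidean bilinear form of signature `(r, n - r)` on `ℝⁿ`. -/
noncomputable def stdForm (n r : ℕ) : LinearMap.BilinForm ℝ (Fin n → ℝ) :=
  Matrix.toBilin' (Matrix.diagonal fun i : Fin n => if (i : ℕ) < r then (1 : ℝ) else -1)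

/-!
With `B = Aτ A`, `K = J z` and `L = A⁻¹ J̃_{C z} A`, the relation `Aτ J̃_w A = J_{Cτ w}` and
`Cτ C = -1` give `K = -B L`. Moreover `L² = ⟨z, z⟩ = -K²` because `⟨C z, C z⟩ = ⟨z, Cτ C z⟩`, so
`(B L)² = -L²`; cancelling the unit `L` gives `B L B = -L`, i.e. `B K B = -K`. Hence `B` is a unit,
`B⁻¹ K B⁻¹ = -K` as well, and for odd `p`
`B K₁ ⋯ K_p B = (B K₁ B)(B⁻¹ K₂ B⁻¹) ⋯ (B K_p B) = (-1)^p K₁ ⋯ K_p`.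
-/

section Ring

variable {R : Type*} [Ring R]

theorem mul_mul_eq_neg_of_mul_mul_self {B L : R} (hL : IsUnit L)
    (h : B * L * (B * L) = -(L * L)) : B * L * B = -L :=
  hL.mul_right_cancel (by rw [neg_mul, ← h, mul_assoc])

theorem isUnit_of_mul_mul_eq_neg {B : R} (K : Rˣ) (h : B * K * B = -K) : IsUnit B := by
  have hr : B * -(K * B * ↑K⁻¹) = 1 := by
    calc B * -(K * B * ↑K⁻¹) = -(B * K * B * ↑K⁻¹) := by noncomm_ring
      _ = 1 := by rw [h]; simp
  have hl : -(↑K⁻¹ * B * K) * B = 1 := by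
    calc -(↑K⁻¹ * B * K) * B = -(↑K⁻¹ * (B * K * B)) := by noncomm_ring
      _ = 1 := by rw [h]; simp
  exact isUnit_iff_exists.mpr ⟨_, hr, left_inv_eq_right_inv hl hr ▸ hl⟩

theorem Units.inv_mul_mul_inv_eq_neg (u : Rˣ) {K : R} (h : ↑u * K * ↑u = -K) :
    ↑u⁻¹ * K * ↑u⁻¹ = -K := by
  calc ↑u⁻¹ * K * ↑u⁻¹ = -(↑u⁻¹ * (↑u * K * ↑u) * ↑u⁻¹) := by rw [h]; noncomm_ring
    _ = -K := by simp [mul_assoc]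

theorem Units.mul_list_prod_mul_eq_neg_one_pow (u : Rˣ) (l : List R)
    (h : ∀ K ∈ l, ↑u * K * ↑u = -K) :
    ↑u * l.prod * ↑(if Even l.length then u⁻¹ else u) = (-1) ^ l.length * l.prod := by
  induction l generalizing u with
  | nil => simp
  | cons K l ih =>
    have hK := h K List.mem_cons_self
    have ih' := ih u⁻¹ fun K' hK' => u.inv_mul_mul_inv_eq_neg (h K' (List.mem_cons_of_mem K hK'))
    rw [inv_inv] at ih'
    have hsel : (if Even (l.length + 1) then u⁻¹ else u) = (if Even l.length then u else u⁻¹) := by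
      by_cases hev : Even l.length <;> simp [Nat.even_add_one, hev]
    calc ↑u * (K :: l).prod * ↑(if Even (K :: l).length then u⁻¹ else u)
        = (↑u * K * ↑u) * (↑u⁻¹ * l.prod * ↑(if Even l.length then u else u⁻¹)) := by
          rw [List.prod_cons, List.length_cons, hsel]
          simp only [mul_assoc, Units.mul_inv_cancel_left]
      _ = (-1) ^ (K :: l).length * (K :: l).prod := by
          rw [hK, ih', List.length_cons, List.prod_cons, pow_succ, mul_neg_one, neg_mul, neg_mul,
            ← mul_assoc, ((Commute.neg_one_right K).pow_right _).eq, mul_assoc]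

theorem Units.mul_list_prod_mul_eq_neg_of_odd (u : Rˣ) {l : List R}
    (h : ∀ K ∈ l, ↑u * K * ↑u = -K) (hl : Odd l.length) : ↑u * l.prod * ↑u = -l.prod := by
  simpa [Nat.not_even_iff_odd.mpr hl, hl.neg_one_pow] using u.mul_list_prod_mul_eq_neg_one_pow l h

end Ring

theorem isUnit_of_mul_self_eq_smul_one {𝕜 R : Type*} [Field 𝕜] [Ring R] [Algebra 𝕜 R] {x : R}
    {c : 𝕜} (h : x * x = c • 1) (hc : c ≠ 0) : IsUnit x :=
  isUnit_iff_exists.mpr ⟨c⁻¹ • x, by rw [mul_smul_comm, h, smul_smul, inv_mul_cancel₀ hc, one_smul],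
    by rw [smul_mul_assoc, h, smul_smul, inv_mul_cancel₀ hc, one_smul]⟩

section Representations

variable {𝕜 V U W : Type*} [Field 𝕜] [AddCommGroup V] [Module 𝕜 V]
  [AddCommGroup U] [Module 𝕜 U] [AddCommGroup W] [Module 𝕜 W]

theorem comp_mul_mul_comp_eq_neg (Q Q' : LinearMap.BilinForm 𝕜 V)
    (J : V →ₗ[𝕜] Module.End 𝕜 U) (hJ : ∀ z, J z * J z = -(Q z z) • 1)
    (J' : V →ₗ[𝕜] Module.End 𝕜 W) (hJ' : ∀ w, J' w * J' w = -(Q' w w) • 1)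
    (A : U →ₗ[𝕜] W) (hA : Function.Bijective A) (Aτ : W →ₗ[𝕜] U) (C Cτ : V →ₗ[𝕜] V)
    (hCτ : ∀ z w, Q' (C z) w = Q z (Cτ w)) (hrel : ∀ w, Aτ ∘ₗ J' w ∘ₗ A = J (Cτ w))
    (hCτC : Cτ ∘ₗ C = -LinearMap.id) {z : V} (hz : Q z z ≠ 0) :
    (Aτ ∘ₗ A) * J z * (Aτ ∘ₗ A) = -J z := by
  set B : Module.End 𝕜 U := Aτ ∘ₗ A
  set e := LinearEquiv.ofBijective A hA
  set L : Module.End 𝕜 U := e.symm.toLinearMap ∘ₗ J' (C z) ∘ₗ A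
  have hCτCz : Cτ (C z) = -z := by simpa using LinearMap.congr_fun hCτC z
  have hK : J z = -(B * L) := by
    have hBL : B * L = Aτ ∘ₗ J' (C z) ∘ₗ A := by
      ext x
      simp [B, L, e]
    rw [hBL, hrel, hCτCz, map_neg, neg_neg]
  have hLL : L * L = Q z z • 1 := by
    have hQ' : Q' (C z) (C z) = -Q z z := by rw [hCτ, hCτCz, map_neg]
    ext x
    have hJ'x := LinearMap.congr_fun (hJ' (C z)) (A x)
    simp only [Module.End.mul_apply, hQ', neg_neg] at hJ'x
    simp [L, e, hJ'x]
  have hBLB : B * L * B = -L := by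
    refine mul_mul_eq_neg_of_mul_mul_self (isUnit_of_mul_self_eq_smul_one hLL hz) ?_
    rw [hLL, ← neg_neg (B * L), neg_mul_neg, ← hK, hJ, neg_smul]
  rw [hK]
  calc B * -(B * L) * B = -(B * (B * L * B)) := by noncomm_ring
    _ = -(-(B * L)) := by rw [hBLB, mul_neg]

end Representations

theorem AtauA_conjugates_odd_product_to_neg_general
    {U W : Type*}
    [AddCommGroup U] [Module ℝ U]
    [AddCommGroup W] [Module ℝ W]
    (n r s : ℕ)
    (J : (Fin n → ℝ) →ₗ[ℝ] Module.End ℝ U)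
    (hJ : ∀ z, J z * J z = -(stdForm n r z z) • (1 : Module.End ℝ U))
    (J' : (Fin n → ℝ) →ₗ[ℝ] Module.End ℝ W)
    (hJ' : ∀ w, J' w * J' w = -(stdForm n s w w) • (1 : Module.End ℝ W))
    (A : U →ₗ[ℝ] W) (hA : Function.Bijective A)
    (C : (Fin n → ℝ) →ₗ[ℝ] (Fin n → ℝ))
    (Aτ : W →ₗ[ℝ] U)
    (Cτ : (Fin n → ℝ) →ₗ[ℝ] (Fin n → ℝ))
    (hCτ : ∀ z w : Fin n → ℝ, stdForm n s (C z) w = stdForm n r z (Cτ w))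
    (hrel : ∀ w : Fin n → ℝ,
      (Aτ ∘ₗ (J' w : W →ₗ[ℝ] W) ∘ₗ A : U →ₗ[ℝ] U) = J (Cτ w))
    (hCτC : Cτ ∘ₗ C = -LinearMap.id)
    (m : ℕ) (z : Fin (2 * m + 1) → (Fin n → ℝ))
    (hz : ∀ i, stdForm n r (z i) (z i) = 1 ∨ stdForm n r (z i) (z i) = -1) :
    (Aτ ∘ₗ A : Module.End ℝ U) * (List.ofFn fun i => J (z i)).prod *
        (Aτ ∘ₗ A : Module.End ℝ U) =
      -(List.ofFn fun i => J (z i)).prod := by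
  have hz0 : ∀ i, stdForm n r (z i) (z i) ≠ 0 := fun i => by
    rcases hz i with h | h <;> norm_num [h]
  have hconj : ∀ i, (Aτ ∘ₗ A) * J (z i) * (Aτ ∘ₗ A) = -J (z i) := fun i =>
    comp_mul_mul_comp_eq_neg _ _ J hJ J' hJ' A hA Aτ C Cτ hCτ hrel hCτC (hz0 i)
  obtain ⟨K, hK⟩ := isUnit_of_mul_self_eq_smul_one (hJ _) (neg_ne_zero.mpr (hz0 0))
  obtain ⟨u, hu⟩ := isUnit_of_mul_mul_eq_neg K (hK ▸ hconj 0)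
  rw [← hu]
  refine u.mul_list_prod_mul_eq_neg_of_odd ?_ (by simp)
  simp only [List.mem_ofFn, forall_exists_index, forall_apply_eq_imp_iff, hu]
  exact hconj

/-- Under the isomorphism relation `Aᵀ J̃_z A = J_{Cᵀ z}` with
`C Cᵀ = Cᵀ C = -Id` and `r ≠ s`, for an odd number `p = 2m+1` of orthonormal vectors
`z_1, …, z_p` of `ℝ^{r,s}` one has `Aᵀ A ∘ (J_{z_1} ⋯ J_{z_p}) ∘ Aᵀ A = -J_{z_1} ⋯ J_{z_p}`. -/
theorem AtauA_conjugates_odd_product_to_neg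
    {U W : Type*}
    [AddCommGroup U] [Module ℝ U] [FiniteDimensional ℝ U]
    [AddCommGroup W] [Module ℝ W] [FiniteDimensional ℝ W]
    (n r s : ℕ) (hn : r + s = n) (hrs : r ≠ s)
    (BU : LinearMap.BilinForm ℝ U) (hBUnd : BU.Nondegenerate)
    (hBUsymm : ∀ x y : U, BU x y = BU y x)
    (BW : LinearMap.BilinForm ℝ W) (hBWnd : BW.Nondegenerate)
    (hBWsymm : ∀ x y : W, BW x y = BW y x)
    (J : (Fin n → ℝ) →ₗ[ℝ] Module.End ℝ U)
    (hJ : ∀ z, J z * J z = -(stdForm n r z z) • (1 : Module.End ℝ U))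
    (hJskew : ∀ (z : Fin n → ℝ) (x y : U), BU (J z x) y + BU x (J z y) = 0)
    (J' : (Fin n → ℝ) →ₗ[ℝ] Module.End ℝ W)
    (hJ' : ∀ w, J' w * J' w = -(stdForm n s w w) • (1 : Module.End ℝ W))
    (hJ'skew : ∀ (w : Fin n → ℝ) (x y : W), BW (J' w x) y + BW x (J' w y) = 0)
    (A : U →ₗ[ℝ] W) (hA : Function.Bijective A)
    (C : (Fin n → ℝ) →ₗ[ℝ] (Fin n → ℝ)) (hC : Function.Bijective C)
    (Aτ : W →ₗ[ℝ] U) (hAτ : ∀ (x : U) (y : W), BW (A x) y = BU x (Aτ y))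
    (Cτ : (Fin n → ℝ) →ₗ[ℝ] (Fin n → ℝ))
    (hCτ : ∀ z w : Fin n → ℝ, stdForm n s (C z) w = stdForm n r z (Cτ w))
    (hrel : ∀ w : Fin n → ℝ,
      (Aτ ∘ₗ (J' w : W →ₗ[ℝ] W) ∘ₗ A : U →ₗ[ℝ] U) = J (Cτ w))
    (hCCτ : C ∘ₗ Cτ = -LinearMap.id) (hCτC : Cτ ∘ₗ C = -LinearMap.id)
    (m : ℕ) (z : Fin (2 * m + 1) → (Fin n → ℝ))
    (hz : ∀ i, stdForm n r (z i) (z i) = 1 ∨ stdForm n r (z i) (z i) = -1)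
    (hzo : ∀ i j, i ≠ j → stdForm n r (z i) (z j) = 0) :
    (Aτ ∘ₗ A : Module.End ℝ U) * (List.ofFn fun i => J (z i)).prod *
        (Aτ ∘ₗ A : Module.End ℝ U) =
      -(List.ofFn fun i => J (z i)).prod :=
  AtauA_conjugates_odd_product_to_neg_general n r s J hJ J' hJ' A hA C Aτ Cτ hCτ hrel hCτC m z hz
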